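/- If f, g are smooth complex-valued functions on ℂ⁴ (coordinates λ_α, μ^{α̇} = u^{α̇} + i v^{α̇}) that take real values on the deformed real slice 𝕋_ℝ = {λ real, v^{α̇} = ε^{α̇β̇} ∂h/∂u^{β̇}} for a smooth real function h(u, λ), then the Poisson bracket {f,g} = ε^{α̇β̇} ∂f/∂μ^{α̇} · ∂g/∂μ^{β̇}, restricted to 𝕋_ℝ, is also real-valued. -/

import Mathlib

open Complex

noncomputable section

/-- Complexified twistor coordinates: `λ ∈ ℝ²` (real on the slice) and `μ ∈ ℂ²`. -/
abbrev TwC := (Fin 2 → ℝ) × (Fin 2 → ℂ)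

/-- Partial derivative `∂f/∂μ^{i}` (holomorphic derivative in the `μ` variables). -/
def pdMu (f : TwC → ℂ) (i : Fin 2) (p : TwC) : ℂ :=
  fderiv ℂ (fun μ => f (p.1, μ)) p.2 (Pi.single i 1)

/-- The degenerate Poisson bracket `{f,g} = ε^{α̇β̇} ∂f/∂μ^{α̇} ∂g/∂μ^{β̇}`. -/
def pb (f g : TwC → ℂ) (p : TwC) : ℂ :=
  pdMu f 0 p * pdMu g 1 p - pdMu f 1 p * pdMu g 0 p

/-- Partial derivative `∂h/∂u^{i}` of the real generating function. -/
def pdU (h : (Fin 2 → ℝ) × (Fin 2 → ℝ) → ℝ) (i : Fin 2) (lam u : Fin 2 → ℝ) : ℝ :=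
  fderiv ℝ (fun u' => h (lam, u')) u (Pi.single i 1)

/-- The point of the deformed real slice `𝕋_ℝ` over `(λ, u)`:
`μ^{α̇} = u^{α̇} + i v^{α̇}` with `v^{α̇} = ε^{α̇β̇} ∂h/∂u^{β̇}`,
i.e. `v⁰ = ∂h/∂u¹` and `v¹ = −∂h/∂u⁰`. -/
def slicePt (h : (Fin 2 → ℝ) × (Fin 2 → ℝ) → ℝ) (lam u : Fin 2 → ℝ) : TwC :=
  (lam, fun i =>
    (u i : ℂ) + I * (if i = 0 then (pdU h 1 lam u : ℂ) else -(pdU h 0 lam u : ℂ)))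

/-- second partial of h -/
def sdU (h : (Fin 2 → ℝ) × (Fin 2 → ℝ) → ℝ) (lam u : Fin 2 → ℝ) (j k : Fin 2) : ℝ :=
  fderiv ℝ (fderiv ℝ (fun u' => h (lam, u'))) u (Pi.single k 1) (Pi.single j 1)

lemma clm_fin2_apply (L : (Fin 2 → ℂ) →L[ℂ] ℂ) (w : Fin 2 → ℂ) :
    L w = w 0 * L (Pi.single 0 1) + w 1 * L (Pi.single 1 1) := by
  have hw : w = w 0 • (Pi.single 0 1 : Fin 2 → ℂ) + w 1 • (Pi.single 1 1 : Fin 2 → ℂ) := by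
    funext i; fin_cases i <;> simp [Pi.single_apply]
  conv_lhs => rw [hw]
  rw [map_add, L.map_smul, L.map_smul, smul_eq_mul, smul_eq_mul]

lemma sdU_symm (h : (Fin 2 → ℝ) × (Fin 2 → ℝ) → ℝ) (hh : ContDiff ℝ (⊤ : ℕ∞) h)
    (lam u : Fin 2 → ℝ) (j k : Fin 2) : sdU h lam u j k = sdU h lam u k j := by
  have hl : ContDiff ℝ (⊤ : ℕ∞) (fun u' : Fin 2 → ℝ => h (lam, u')) :=
    hh.comp (contDiff_const.prodMk contDiff_id)
  have hd1 : ∀ y, HasFDerivAt (fun u' : Fin 2 → ℝ => h (lam, u'))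
      (fderiv ℝ (fun u' : Fin 2 → ℝ => h (lam, u')) y) y :=
    fun y => (hl.differentiable (by simp) y).hasFDerivAt
  have hd2 : HasFDerivAt (fderiv ℝ (fun u' : Fin 2 → ℝ => h (lam, u')))
      (fderiv ℝ (fderiv ℝ (fun u' : Fin 2 → ℝ => h (lam, u'))) u) u :=
    ((hl.fderiv_right (m := (⊤ : ℕ∞)) (by simp)).differentiable (by simp) u).hasFDerivAt
  exact second_derivative_symmetric hd1 hd2 _ _

/-- key reality relation from differentiating the slice -/
lemma key_rel (h : (Fin 2 → ℝ) × (Fin 2 → ℝ) → ℝ) (hh : ContDiff ℝ (⊤ : ℕ∞) h)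
    (f : TwC → ℂ)
    (hf : ∀ lam : Fin 2 → ℝ, Differentiable ℂ (fun μ => f (lam, μ)))
    (hfr : ∀ lam u : Fin 2 → ℝ, (f (slicePt h lam u)).im = 0)
    (lam u : Fin 2 → ℝ) (k : Fin 2) :
    ((((Pi.single k 1 : Fin 2 → ℝ) 0 : ℂ) + I * (sdU h lam u 1 k : ℂ)) * pdMu f 0 (slicePt h lam u)
     + (((Pi.single k 1 : Fin 2 → ℝ) 1 : ℂ) + I * (-(sdU h lam u 0 k : ℂ))) * pdMu f 1 (slicePt h lam u)).im = 0 := by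
  classical
  have hl : ContDiff ℝ (⊤ : ℕ∞) (fun u' : Fin 2 → ℝ => h (lam, u')) :=
    hh.comp (contDiff_const.prodMk contDiff_id)
  set D1 := fderiv ℝ (fun u' : Fin 2 → ℝ => h (lam, u')) with hD1def
  set D2 := fderiv ℝ D1 u with hD2def
  have hd2 : HasFDerivAt D1 D2 u :=
    ((hl.fderiv_right (m := (⊤ : ℕ∞)) (by simp)).differentiable (by simp) u).hasFDerivAt
  -- the line in u-space
  set ℓ : ℝ → (Fin 2 → ℝ) := fun t => u + t • (Pi.single k 1 : Fin 2 → ℝ) with hℓdef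
  have hℓ0 : ℓ 0 = u := by simp [hℓdef]
  have hline : HasDerivAt ℓ (Pi.single k 1 : Fin 2 → ℝ) 0 := by
    have := (((hasDerivAt_id (0:ℝ)).smul_const (Pi.single k 1 : Fin 2 → ℝ)).const_add u)
    rw [one_smul] at this; exact this
  -- derivative of pdU along the line
  have hpd : ∀ j : Fin 2, HasDerivAt (fun t => pdU h j lam (ℓ t)) (sdU h lam u j k) 0 := by
    intro j
    have h1 : HasDerivAt (fun t => D1 (ℓ t)) (D2 (Pi.single k 1)) 0 := by
      have hd2' : HasFDerivAt D1 D2 (ℓ 0) := by rw [hℓ0]; exact hd2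
      have := hd2'.comp_hasDerivAt (0:ℝ) hline
      simpa [Function.comp_def] using this
    have h2 := (ContinuousLinearMap.apply ℝ ℝ (Pi.single j 1 : Fin 2 → ℝ)).hasFDerivAt.comp_hasDerivAt (0:ℝ) h1
    simp only [Function.comp_def, ContinuousLinearMap.apply_apply] at h2
    simp only [pdU, sdU, ← hD1def, ← hD2def]
    exact h2
  -- the μ-curve
  set ψ : ℝ → (Fin 2 → ℂ) := fun t => fun i =>
      ((ℓ t) i : ℂ) + I * (if i = 0 then (pdU h 1 lam (ℓ t) : ℂ) else -(pdU h 0 lam (ℓ t) : ℂ)) with hψdef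
  set W : Fin 2 → ℂ := fun i =>
      ((Pi.single k 1 : Fin 2 → ℝ) i : ℂ)
        + I * (if i = 0 then (sdU h lam u 1 k : ℂ) else -(sdU h lam u 0 k : ℂ)) with hWdef
  have hψ : HasDerivAt ψ W 0 := by
    rw [hasDerivAt_pi]
    intro i
    have hcoord : HasDerivAt (fun t => ((ℓ t) i : ℂ)) (((Pi.single k 1 : Fin 2 → ℝ) i : ℂ)) 0 := by
      have : HasDerivAt (fun t : ℝ => (ℓ t) i) ((Pi.single k 1 : Fin 2 → ℝ) i) 0 := by
        have : (fun t : ℝ => (ℓ t) i) = fun t : ℝ => u i + t * (Pi.single k 1 : Fin 2 → ℝ) i := by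
          funext t; simp [hℓdef, Pi.smul_apply, smul_eq_mul]
        rw [this]
        simpa using (hasDerivAt_mul_const ((Pi.single k 1 : Fin 2 → ℝ) i)).const_add (u i)
      exact this.ofReal_comp
    fin_cases i
    · have h1 : HasDerivAt (fun t => I * (pdU h 1 lam (ℓ t) : ℂ)) (I * (sdU h lam u 1 k : ℂ)) 0 :=
        ((hpd 1).ofReal_comp).const_mul I
      simpa [hψdef, hWdef, Pi.add_def] using hcoord.add h1
    · have h1 : HasDerivAt (fun t => I * (-(pdU h 0 lam (ℓ t) : ℂ))) (I * (-(sdU h lam u 0 k : ℂ))) 0 :=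
        (((hpd 0).ofReal_comp).neg).const_mul I
      simpa [hψdef, hWdef, Pi.add_def] using hcoord.add h1
  -- compose with f
  have hψ0 : ψ 0 = (slicePt h lam u).2 := by
    funext i; simp [hψdef, hℓ0, slicePt]
  set L := fderiv ℂ (fun μ => f (lam, μ)) ((slicePt h lam u).2) with hLdef
  have hfd : HasFDerivAt (fun μ => f (lam, μ)) (L.restrictScalars ℝ) (ψ 0) := by
    rw [hψ0]; exact ((hf lam) _).hasFDerivAt.restrictScalars ℝ
  have hcomp : HasDerivAt (fun t => f (lam, ψ t)) (L W) 0 := by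
    simpa [Function.comp_def] using hfd.comp_hasDerivAt 0 hψ
  have hfeq : (fun t => f (lam, ψ t)) = fun t => f (slicePt h lam (ℓ t)) := by
    funext t; rfl
  rw [hfeq] at hcomp
  have him : HasDerivAt (fun t => (f (slicePt h lam (ℓ t))).im) ((L W).im) 0 := by
    have := Complex.imCLM.hasFDerivAt.comp_hasDerivAt 0 hcomp
    simpa [Function.comp_def] using this
  have hconst : (fun t => (f (slicePt h lam (ℓ t))).im) = fun _ => (0:ℝ) := by
    funext t; exact hfr lam (ℓ t)
  rw [hconst] at him
  have hzero : (L W).im = 0 := him.unique (hasDerivAt_const 0 0)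
  have hLW : L W = W 0 * pdMu f 0 (slicePt h lam u) + W 1 * pdMu f 1 (slicePt h lam u) := by
    rw [clm_fin2_apply]
    simp [pdMu, hLdef, slicePt]
  rw [hLW] at hzero
  simpa [hWdef] using hzero

/-- If `f, g` are holomorphic in `μ` and real-valued on the deformed real slice `𝕋_ℝ`
determined by `h`, then the Poisson bracket `{f,g}` is also real-valued on `𝕋_ℝ`. -/
theorem pb_real_on_deformed_slice
    (h : (Fin 2 → ℝ) × (Fin 2 → ℝ) → ℝ) (hh : ContDiff ℝ (⊤ : ℕ∞) h)
    (f g : TwC → ℂ)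
    (hf : ∀ lam : Fin 2 → ℝ, Differentiable ℂ (fun μ => f (lam, μ)))
    (hg : ∀ lam : Fin 2 → ℝ, Differentiable ℂ (fun μ => g (lam, μ)))
    (hfr : ∀ lam u : Fin 2 → ℝ, (f (slicePt h lam u)).im = 0)
    (hgr : ∀ lam u : Fin 2 → ℝ, (g (slicePt h lam u)).im = 0) :
    ∀ lam u : Fin 2 → ℝ, (pb f g (slicePt h lam u)).im = 0 := by
  intro lam u
  have Ef0 := key_rel h hh f hf hfr lam u 0
  have Ef1 := key_rel h hh f hf hfr lam u 1
  have Eg0 := key_rel h hh g hg hgr lam u 0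
  have Eg1 := key_rel h hh g hg hgr lam u 1
  have hsym : sdU h lam u 0 1 = sdU h lam u 1 0 := sdU_symm h hh lam u 0 1
  set p := slicePt h lam u
  set a0 := pdMu f 0 p; set a1 := pdMu f 1 p
  set b0 := pdMu g 0 p; set b1 := pdMu g 1 p
  set A := sdU h lam u 0 0; set B := sdU h lam u 1 0
  set C := sdU h lam u 1 1
  rw [hsym] at Ef1 Eg1
  simp only [Pi.single_apply, if_pos, if_neg, Fin.isValue, show ((0:Fin 2) ≠ 1) by decide,
    show ((1:Fin 2) ≠ 0) by decide, ite_true, ite_false, if_true, if_false,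
    Complex.ofReal_one, Complex.ofReal_zero, zero_add,
    Complex.add_im, Complex.mul_im, Complex.mul_re, Complex.add_re,
    Complex.I_re, Complex.I_im, Complex.ofReal_re, Complex.ofReal_im,
    Complex.neg_re, Complex.neg_im, Complex.one_re, Complex.one_im] at Ef0 Ef1 Eg0 Eg1
  simp only [pb, Complex.sub_im, Complex.mul_im]
  ring_nf
  ring_nf at Ef0 Ef1 Eg0 Eg1
  linear_combination a0.re * Eg1 + b1.re * Ef0 - a1.re * Eg0 - b0.re * Ef1
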